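/- Let S = S_c ∪ S_p and S' = S'_c ∪ S'_p be two independent samples, each with n ≥ 13/ε² clean examples drawn i.i.d. from 𝒟 and m ≥ (32/ε²)·log(200/ε) perturbations drawn i.i.d. from each u ∈ 𝒰(x) for each clean example (x,y). Let A be the event that there exists h ∈ ℋ with DR_S(h) = 0 but DR_𝒟(h) ≥ ε, and let B be the event that there exists h ∈ ℋ with DR_S(h) = 0 but DR_{S'}(h) ≥ ε/2. Then P(B) ≥ (2/5)·P(A). -/

import Mathlib

open MeasureTheory

/-- Distributional adversarial loss `DR_D(h)`, where the perturbation set of `x` is the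
finite family of distributions `{U x j : j < k}` (so `|U(x)| ≤ k`):
`DR_D(h) = E_{(x,y)∼D}[ max_{u ∈ U(x)} E_{z∼u} 1[h(z) ≠ y] ]`. -/
noncomputable def trueDR {X : Type*} [MeasurableSpace X] {k : ℕ}
    (D : Measure (X × Bool)) (U : X → Fin k → Measure X) (h : X → Bool) : ℝ :=
  ∫ xy, ⨆ j : Fin k, ((U xy.1 j) {z | h z ≠ xy.2}).toReal ∂D

/-- Empirical distributional adversarial loss of `h` on the sample `(Sc, Sp)` where `Sc` is
the clean sample and `Sp i j l` is the `l`-th perturbation of the `i`-th clean example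
drawn from its `j`-th perturbation distribution:
`DR_S(h) = (1/n) Σ_i max_j (1/m) Σ_l 1[h(Sp i j l) ≠ yᵢ]`. -/
noncomputable def empDR {X : Type*} {k n m : ℕ}
    (h : X → Bool) (Sc : Fin n → X × Bool) (Sp : Fin n → Fin k → Fin m → X) : ℝ :=
  (1 / (n : ℝ)) * ∑ i : Fin n, ⨆ j : Fin k,
    (1 / (m : ℝ)) * ∑ l : Fin m, (if h (Sp i j l) ≠ (Sc i).2 then (1 : ℝ) else 0)

/-- Distribution of the training sample `S = S_c ∪ S_p`: `n` i.i.d. clean examples from `D`,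
and, conditionally on the clean sample, for each clean example `(x,y)` and each `j < k`,
`m` i.i.d. perturbations drawn from `U x j`. -/
noncomputable def sampleMeasure {X : Type*} [MeasurableSpace X] {k : ℕ}
    (D : Measure (X × Bool)) (U : X → Fin k → Measure X) (n m : ℕ) :
    Measure ((Fin n → X × Bool) × (Fin n → Fin k → Fin m → X)) :=
  (Measure.pi fun _ : Fin n => D).bind fun sc =>
    (Measure.pi fun i : Fin n =>
        Measure.pi fun j : Fin k =>
          Measure.pi fun _ : Fin m => U (sc i).1 j).map
      fun sp => (sc, sp)

/-!
Fix a sample `S` in the first event, witnessed by `h`. Conditionally on the clean part of an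
independent sample `S'`, the per-example losses `max_j (1/m) Σ_l 1[h(z_{ijl}) ≠ yᵢ]` are
independent `[0,1]`-valued variables, so `DR_{S'}(h)` has conditional variance at most `1/(4n)`
around the average `Ψ` of their conditional means `φ(xᵢ,yᵢ)` (`expectedPerturbLoss`). These
means are i.i.d. in `[0,1]`, so `Ψ` in turn has variance at most `1/(4n)` around `b = E φ`;
hence `E (DR_{S'}(h) - b)² ≤ 1/(2n)`. Since an expected maximum dominates the maximum of
expectations, `b ≥ DR_D(h) ≥ ε`, and Chebyshev gives `P(DR_{S'}(h) < ε/2) ≤ 2/(nε²) ≤ 2/13`.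
Integrating over `S` (Fubini) yields `P(B) ≥ (11/13) P(A) ≥ (2/5) P(A)`.
-/

open ProbabilityTheory
open scoped ENNReal

theorem MeasureTheory.AEStronglyMeasurable.of_comp_eval {n : ℕ} {α : Fin (n + 1) → Type*}
    [∀ i, MeasurableSpace (α i)] {μ : ∀ i, Measure (α i)} [∀ i, IsProbabilityMeasure (μ i)]
    {E : Type*} [NormedAddCommGroup E] [NormedSpace ℝ E] [CompleteSpace E] {i : Fin (n + 1)}
    {f : α i → E}
    (hf : AEStronglyMeasurable (fun x => f (x i)) (Measure.pi μ)) :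
    AEStronglyMeasurable f (μ i) := by
  -- `f` is the integral of `f ∘ eval i` over the remaining coordinates.
  have h := hf.comp_measurePreserving (measurePreserving_piFinSuccAbove μ i).symm
  simp only [Function.comp_def, MeasurableEquiv.piFinSuccAbove_symm_apply,
    Fin.insertNthEquiv_apply, Fin.insertNth_apply_same] at h
  simpa using h.integral_prod_right'

theorem MeasureTheory.mul_measure_le_prod_of_le_measure_preimage_mk {α β : Type*}
    [MeasurableSpace α] [MeasurableSpace β] {μ : Measure α} {ν : Measure β} [SFinite ν]
    {A : Set α} {B : Set (α × β)} {c : ℝ≥0∞} (h : ∀ a ∈ A, c ≤ ν (Prod.mk a ⁻¹' B)) :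
    c * μ A ≤ (μ.prod ν) B := by
  set T := toMeasurable (μ.prod ν) B
  have hT := measurable_measure_prodMk_left (ν := ν) (measurableSet_toMeasurable (μ.prod ν) B)
  calc c * μ A ≤ c * μ {a | c ≤ ν (Prod.mk a ⁻¹' T)} := by
        gcongr
        exact fun a ha => (h a ha).trans (measure_mono fun b hb => subset_toMeasurable _ _ hb)
    _ ≤ ∫⁻ a, ν (Prod.mk a ⁻¹' T) ∂μ := mul_meas_ge_le_lintegral₀ hT.aemeasurable c
    _ = (μ.prod ν) B := by
        rw [← Measure.prod_apply (measurableSet_toMeasurable _ _), measure_toMeasurable]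

theorem MeasureTheory.integral_mem_Icc_zero_one {Ω : Type*} [MeasurableSpace Ω] {μ : Measure Ω}
    [IsProbabilityMeasure μ] {f : Ω → ℝ} (hf : ∀ ω, f ω ∈ Set.Icc 0 1) :
    ∫ ω, f ω ∂μ ∈ Set.Icc 0 1 :=
  ⟨integral_nonneg fun ω => (hf ω).1, by
    simpa using integral_mono_of_nonneg (ae_of_all _ fun ω => (hf ω).1)
      (integrable_const (μ := μ) 1) (ae_of_all _ fun ω => (hf ω).2)⟩

namespace ProbabilityTheory

section Deviation

variable {Ω : Type*} [MeasurableSpace Ω] {μ : Measure Ω} [IsProbabilityMeasure μ]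

theorem integral_sub_sq_eq_variance_add {X : Ω → ℝ} (hX : MemLp X 2 μ) (c : ℝ) :
    ∫ ω, (X ω - c) ^ 2 ∂μ = Var[X; μ] + (μ[X] - c) ^ 2 := by
  have hXc : MemLp (fun ω => X ω - c) 2 μ := hX.sub (memLp_const c)
  rw [← variance_sub_const hX.aestronglyMeasurable c, variance_eq_sub hXc,
    integral_sub (hX.integrable one_le_two) (integrable_const c)]
  simp

theorem lintegral_ofReal_sq_sub_eq_variance_add {X : Ω → ℝ} (hX : MemLp X 2 μ) (c : ℝ) :
    ∫⁻ ω, ENNReal.ofReal ((X ω - c) ^ 2) ∂μ = ENNReal.ofReal (Var[X; μ] + (μ[X] - c) ^ 2) := by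
  rw [← integral_sub_sq_eq_variance_add hX c, ofReal_integral_eq_lintegral_ofReal]
  · exact (hX.sub (memLp_const c)).integrable_sq
  · exact ae_of_all _ fun _ => sq_nonneg _

end Deviation

section Average

variable {n : ℕ} {Ω : Fin n → Type*} [∀ i, MeasurableSpace (Ω i)] {μ : ∀ i, Measure (Ω i)}
  [∀ i, IsProbabilityMeasure (μ i)] {X : ∀ i, Ω i → ℝ}

theorem variance_avg_pi_le (hX : ∀ i, AEStronglyMeasurable (X i) (μ i))
    (hX01 : ∀ i ω, X i ω ∈ Set.Icc 0 1) :
    Var[fun ω => 1 / (n : ℝ) * ∑ i, X i (ω i); Measure.pi μ] ≤ 1 / (4 * n) := by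
  have hsum := variance_sum_pi (μ := μ) fun i =>
    memLp_of_bounded (ae_of_all _ (hX01 i)) (hX i) 2
  rw [Finset.sum_fn] at hsum
  rw [variance_const_mul, hsum]
  calc (1 / (n : ℝ)) ^ 2 * ∑ i, Var[X i; μ i] ≤ (1 / (n : ℝ)) ^ 2 * ∑ _i : Fin n, (1 / 4) := by
        gcongr with i
        have := variance_le_sq_of_bounded (ae_of_all _ (hX01 i)) (hX i).aemeasurable
        norm_num at this ⊢
        exact this
    _ = 1 / (4 * (n : ℝ)) := by
        rcases eq_or_ne n 0 with rfl | hn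
        · simp
        · simp only [Finset.sum_const, Finset.card_univ, Fintype.card_fin, nsmul_eq_mul]
          field_simp

theorem lintegral_sq_sub_avg_pi_le (hX : ∀ i, AEStronglyMeasurable (X i) (μ i))
    (hX01 : ∀ i ω, X i ω ∈ Set.Icc 0 1) (c : ℝ) :
    ∫⁻ ω, ENNReal.ofReal ((1 / (n : ℝ) * ∑ i, X i (ω i) - c) ^ 2) ∂Measure.pi μ ≤
      ENNReal.ofReal (1 / (4 * n) + (1 / (n : ℝ) * ∑ i, ∫ x, X i x ∂μ i - c) ^ 2) := by
  have hL (i : Fin n) : MemLp (X i) 2 (μ i) := memLp_of_bounded (ae_of_all _ (hX01 i)) (hX i) 2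
  have hmean : ∫ ω, 1 / (n : ℝ) * ∑ i, X i (ω i) ∂Measure.pi μ =
      1 / (n : ℝ) * ∑ i, ∫ x, X i x ∂μ i := by
    rw [integral_const_mul, integral_finsetSum _ fun i _ =>
      integrable_comp_eval ((hL i).integrable one_le_two)]
    simp only [integral_comp_eval (hX _)]
  have hS : MemLp (fun ω => 1 / (n : ℝ) * ∑ i, X i (ω i)) 2 (Measure.pi μ) :=
    (memLp_finsetSum _ fun i _ =>
      (hL i).comp_measurePreserving (measurePreserving_eval μ i)).const_mul _
  rw [lintegral_ofReal_sq_sub_eq_variance_add hS, hmean]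
  exact ENNReal.ofReal_le_ofReal (by linarith [variance_avg_pi_le hX hX01])

end Average

end ProbabilityTheory

namespace DistributionalRobustness

abbrev Sample (X : Type*) (k n m : ℕ) : Type _ := (Fin n → X × Bool) × (Fin n → Fin k → Fin m → X)

variable {X : Type*} {k n m : ℕ}

noncomputable def perturbError (h : X → Bool) (y : Bool) (v : Fin k → Fin m → X) (j : Fin k) : ℝ :=
  (1 / (m : ℝ)) * ∑ l : Fin m, (if h (v j l) ≠ y then (1 : ℝ) else 0)

noncomputable def perturbLoss (h : X → Bool) (y : Bool) (v : Fin k → Fin m → X) : ℝ :=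
  ⨆ j : Fin k, perturbError h y v j

theorem empDR_eq_sum_perturbLoss (h : X → Bool) (sc : Fin n → X × Bool)
    (sp : Fin n → Fin k → Fin m → X) :
    empDR h sc sp = 1 / (n : ℝ) * ∑ i, perturbLoss h (sc i).2 (sp i) := rfl

theorem perturbError_mem_Icc (h : X → Bool) (y : Bool) (v : Fin k → Fin m → X) (j : Fin k) :
    perturbError h y v j ∈ Set.Icc 0 1 := by
  rw [perturbError, one_div_mul_eq_div]
  refine ⟨by positivity, div_le_one_of_le₀ ?_ m.cast_nonneg⟩
  calc ∑ l : Fin m, (if h (v j l) ≠ y then (1 : ℝ) else 0) ≤ ∑ _l : Fin m, (1 : ℝ) :=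
        Finset.sum_le_sum fun l _ => by split_ifs <;> norm_num
    _ = m := by simp

theorem perturbLoss_mem_Icc (h : X → Bool) (y : Bool) (v : Fin k → Fin m → X) :
    perturbLoss h y v ∈ Set.Icc 0 1 :=
  ⟨Real.iSup_nonneg fun j => (perturbError_mem_Icc h y v j).1,
    Real.iSup_le (fun j => (perturbError_mem_Icc h y v j).2) zero_le_one⟩

theorem perturbError_le_perturbLoss (h : X → Bool) (y : Bool) (v : Fin k → Fin m → X) (j : Fin k) :
    perturbError h y v j ≤ perturbLoss h y v :=
  le_ciSup (Set.finite_range (perturbError h y v)).bddAbove j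

variable [MeasurableSpace X] {h : X → Bool}

noncomputable def perturbMeasure (U : X → Fin k → Measure X) (m : ℕ) (x : X) :
    Measure (Fin k → Fin m → X) :=
  Measure.pi fun j => Measure.pi fun _ : Fin m => U x j

noncomputable def expectedPerturbLoss (U : X → Fin k → Measure X) (m : ℕ) (h : X → Bool)
    (p : X × Bool) : ℝ :=
  ∫ v, perturbLoss h p.2 v ∂perturbMeasure U m p.1

noncomputable def adversarialLoss (U : X → Fin k → Measure X) (h : X → Bool) (p : X × Bool) : ℝ :=
  ⨆ j : Fin k, ((U p.1 j) {z | h z ≠ p.2}).toReal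

noncomputable def sampleKernel (U : X → Fin k → Measure X) (n m : ℕ) (sc : Fin n → X × Bool) :
    Measure (Sample X k n m) :=
  (Measure.pi fun i => perturbMeasure U m (sc i).1).map fun sp => (sc, sp)

theorem sampleMeasure_eq_bind (D : Measure (X × Bool)) (U : X → Fin k → Measure X) :
    sampleMeasure D U n m = (Measure.pi fun _ : Fin n => D).bind (sampleKernel U n m) := rfl

theorem trueDR_eq_integral_adversarialLoss (D : Measure (X × Bool)) (U : X → Fin k → Measure X)
    (h : X → Bool) : trueDR D U h = ∫ p, adversarialLoss U h p ∂D := rfl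

theorem measurable_perturbError (hh : Measurable h) (j : Fin k) :
    Measurable (Function.uncurry fun y (v : Fin k → Fin m → X) => perturbError h y v j) := by
  refine (Finset.measurable_sum _ fun l _ => ?_).const_mul _
  refine Measurable.ite ?_ measurable_const measurable_const
  exact (measurableSet_eq_fun (hh.comp (by fun_prop)) measurable_fst).compl

theorem measurable_perturbLoss (hh : Measurable h) :
    Measurable (Function.uncurry (perturbLoss (k := k) (m := m) h)) :=
  Measurable.iSup fun j => measurable_perturbError hh j

theorem measurable_empDR (hh : Measurable h) :
    Measurable fun s : Sample X k n m => empDR h s.1 s.2 := by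
  simp only [empDR_eq_sum_perturbLoss]
  refine (Finset.measurable_sum _ fun i _ => ?_).const_mul _
  have hi : Measurable fun s : Sample X k n m => ((s.1 i).2, s.2 i) := by fun_prop
  have hLi := (measurable_perturbLoss (k := k) (m := m) hh).comp hi
  exact hLi

variable {U : X → Fin k → Measure X}

theorem isProbabilityMeasure_perturbMeasure (hU : ∀ x j, IsProbabilityMeasure (U x j)) (x : X) :
    IsProbabilityMeasure (perturbMeasure U m x) := by
  have := hU x
  unfold perturbMeasure
  infer_instance

theorem integral_perturbError (hU : ∀ x j, IsProbabilityMeasure (U x j)) (hh : Measurable h)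
    (hm : m ≠ 0) (x : X) (y : Bool) (j : Fin k) :
    ∫ v, perturbError h y v j ∂perturbMeasure U m x = ((U x j) {z | h z ≠ y}).toReal := by
  have := hU x
  set s := {z | h z ≠ y}
  have hs : MeasurableSet s := ((measurableSet_singleton y).preimage hh).compl
  have hmp (l : Fin m) :
      MeasurePreserving (fun v : Fin k → Fin m → X => v j l) (perturbMeasure U m x) (U x j) :=
    (measurePreserving_eval (fun _ => U x j) l).comp
      (measurePreserving_eval (fun j => Measure.pi fun _ : Fin m => U x j) j)
  have hind (l : Fin m) (v : Fin k → Fin m → X) : (if h (v j l) ≠ y then (1 : ℝ) else 0) =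
      ((fun v : Fin k → Fin m → X => v j l) ⁻¹' s).indicator (fun _ => 1) v := by
    simp [s, Set.indicator_apply]
  have hpre (l : Fin m) := hs.preimage (hmp l).measurable
  simp only [perturbError, hind]
  have := isProbabilityMeasure_perturbMeasure (m := m) hU x
  rw [integral_const_mul, integral_finsetSum _ fun l _ =>
    (integrable_const (1 : ℝ)).indicator (μ := perturbMeasure U m x) (hpre l)]
  simp only [integral_indicator_const _ (hpre _), (hmp _).measureReal_preimage hs.nullMeasurableSet,
    smul_eq_mul, mul_one, Finset.sum_const, Finset.card_univ, Fintype.card_fin, nsmul_eq_mul,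
    measureReal_def]
  field_simp

theorem adversarialLoss_le_expectedPerturbLoss (hU : ∀ x j, IsProbabilityMeasure (U x j))
    (hh : Measurable h) (hm : m ≠ 0) (p : X × Bool) :
    adversarialLoss U h p ≤ expectedPerturbLoss U m h p := by
  have := isProbabilityMeasure_perturbMeasure (m := m) hU p.1
  have hint (f : (Fin k → Fin m → X) → ℝ) (hf : Measurable f) (hf01 : ∀ v, f v ∈ Set.Icc 0 1) :
      Integrable f (perturbMeasure U m p.1) :=
    .of_mem_Icc 0 1 hf.aemeasurable (ae_of_all _ hf01)
  refine Real.iSup_le (fun j => ?_) (integral_nonneg fun v => (perturbLoss_mem_Icc h p.2 v).1)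
  rw [← integral_perturbError hU hh hm, expectedPerturbLoss]
  refine integral_mono (hint _ ?_ (perturbError_mem_Icc h p.2 · j))
    (hint _ ?_ (perturbLoss_mem_Icc h p.2)) fun v => ?_
  · exact (measurable_perturbError hh j).of_uncurry_left
  · exact (measurable_perturbLoss hh).of_uncurry_left
  · exact perturbError_le_perturbLoss h p.2 v j

theorem expectedPerturbLoss_mem_Icc (hU : ∀ x j, IsProbabilityMeasure (U x j)) (p : X × Bool) :
    expectedPerturbLoss U m h p ∈ Set.Icc 0 1 :=
  have := isProbabilityMeasure_perturbMeasure (m := m) hU p.1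
  integral_mem_Icc_zero_one (perturbLoss_mem_Icc h p.2)

/- `U` is not assumed measurable in `x`, and `Measure.bind` along a kernel that is not
a.e.-measurable is `0`. -/
theorem sampleMeasure_eq_zero_of_not_aemeasurable {D : Measure (X × Bool)}
    (hK : ¬AEMeasurable (sampleKernel U n m) (Measure.pi fun _ => D)) :
    sampleMeasure D U n m = 0 := by
  rw [sampleMeasure_eq_bind, Measure.bind, Measure.map_of_not_aemeasurable hK, Measure.join_zero]

theorem isProbabilityMeasure_sampleMeasure {D : Measure (X × Bool)} [IsProbabilityMeasure D]
    (hU : ∀ x j, IsProbabilityMeasure (U x j))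
    (hK : AEMeasurable (sampleKernel U n m) (Measure.pi fun _ => D)) :
    IsProbabilityMeasure (sampleMeasure D U n m) := by
  refine isProbabilityMeasure_bind hK (ae_of_all _ fun sc => ?_)
  have := fun i => isProbabilityMeasure_perturbMeasure (m := m) hU (sc i).1
  exact Measure.isProbabilityMeasure_map measurable_prodMk_left.aemeasurable

theorem lintegral_sampleKernel {f : Sample X k n m → ℝ≥0∞}
    (hf : Measurable f) (sc : Fin n → X × Bool) :
    ∫⁻ s, f s ∂sampleKernel U n m sc =
      ∫⁻ sp, f (sc, sp) ∂Measure.pi fun i => perturbMeasure U m (sc i).1 :=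
  lintegral_map hf measurable_prodMk_left

theorem aestronglyMeasurable_expectedPerturbLoss {D : Measure (X × Bool)} [IsProbabilityMeasure D]
    (hU : ∀ x j, IsProbabilityMeasure (U x j)) (hh : Measurable h)
    (hK : AEMeasurable (sampleKernel U (n + 1) m) (Measure.pi fun _ => D)) :
    AEStronglyMeasurable (expectedPerturbLoss U m h) D := by
  -- `φ (sc 0)` is the `sampleKernel`-integral of the first example's loss, so it inherits the
  -- a.e.-measurability of the kernel; then integrate out the other clean examples.
  have hF : Measurable fun s : Sample X k (n + 1) m =>
      ENNReal.ofReal (perturbLoss h (s.1 0).2 (s.2 0)) := by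
    have hL0 := (measurable_perturbLoss (k := k) (m := m) hh).comp
      (f := fun s : Sample X k (n + 1) m => ((s.1 0).2, s.2 0)) (by fun_prop)
    exact ENNReal.measurable_ofReal.comp hL0
  have hlint (sc : Fin (n + 1) → X × Bool) :
      ∫⁻ s, ENNReal.ofReal (perturbLoss h (s.1 0).2 (s.2 0)) ∂sampleKernel U (n + 1) m sc =
        ENNReal.ofReal (expectedPerturbLoss U m h (sc 0)) := by
    have := fun i => isProbabilityMeasure_perturbMeasure (m := m) hU (sc i).1
    have hL := (measurable_perturbLoss (k := k) (m := m) hh).of_uncurry_left (x := (sc 0).2)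
    rw [lintegral_sampleKernel hF, expectedPerturbLoss, ofReal_integral_eq_lintegral_ofReal
      (.of_mem_Icc 0 1 hL.aemeasurable (ae_of_all _ (perturbLoss_mem_Icc h _)))
      (ae_of_all _ fun v => (perturbLoss_mem_Icc h _ v).1)]
    exact (measurePreserving_eval (fun i => perturbMeasure U m (sc i).1) 0).lintegral_comp
      (f := fun v => ENNReal.ofReal (perturbLoss h (sc 0).2 v)) (ENNReal.measurable_ofReal.comp hL)
  have h1 := ((Measure.measurable_lintegral hF).comp_aemeasurable hK).ennreal_toReal
  simp only [Function.comp_def, hlint,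
    ENNReal.toReal_ofReal (expectedPerturbLoss_mem_Icc hU _).1] at h1
  exact h1.aestronglyMeasurable.of_comp_eval

theorem lintegral_sq_sub_empDR_le {D : Measure (X × Bool)} [IsProbabilityMeasure D]
    (hU : ∀ x j, IsProbabilityMeasure (U x j)) (hh : Measurable h) (hn : n ≠ 0)
    (hK : AEMeasurable (sampleKernel U n m) (Measure.pi fun _ => D))
    (hφ : AEStronglyMeasurable (expectedPerturbLoss U m h) D) :
    ∫⁻ s, ENNReal.ofReal ((empDR h s.1 s.2 - ∫ p, expectedPerturbLoss U m h p ∂D) ^ 2)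
      ∂sampleMeasure D U n m ≤ ENNReal.ofReal (1 / (2 * n)) := by
  set b := ∫ p, expectedPerturbLoss U m h p ∂D
  set Ψ := fun sc : Fin n → X × Bool => 1 / (n : ℝ) * ∑ i, expectedPerturbLoss U m h (sc i)
  have hF : Measurable fun s : Sample X k n m =>
      ENNReal.ofReal ((empDR h s.1 s.2 - b) ^ 2) :=
    ENNReal.measurable_ofReal.comp (((measurable_empDR hh).sub_const b).pow_const 2)
  have hcond (sc : Fin n → X × Bool) :
      ∫⁻ s, ENNReal.ofReal ((empDR h s.1 s.2 - b) ^ 2) ∂sampleKernel U n m sc ≤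
        ENNReal.ofReal (1 / (4 * n)) + ENNReal.ofReal ((Ψ sc - b) ^ 2) := by
    have := fun i => isProbabilityMeasure_perturbMeasure (m := m) hU (sc i).1
    rw [lintegral_sampleKernel hF, ← ENNReal.ofReal_add (by positivity) (sq_nonneg _)]
    exact lintegral_sq_sub_avg_pi_le (X := fun i => perturbLoss h (sc i).2)
      (fun i => (measurable_perturbLoss hh).of_uncurry_left.aestronglyMeasurable)
      (fun i => perturbLoss_mem_Icc h _) b
  have hΨ : ∫⁻ sc, ENNReal.ofReal ((Ψ sc - b) ^ 2) ∂Measure.pi (fun _ => D) ≤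
      ENNReal.ofReal (1 / (4 * n)) := by
    have := lintegral_sq_sub_avg_pi_le (μ := fun _ : Fin n => D)
      (X := fun _ => expectedPerturbLoss U m h) (fun _ => hφ)
      (fun _ => expectedPerturbLoss_mem_Icc hU) b
    simpa [Finset.sum_const, hn, b, Ψ] using this
  calc ∫⁻ s, ENNReal.ofReal ((empDR h s.1 s.2 - b) ^ 2) ∂sampleMeasure D U n m
      = ∫⁻ sc, ∫⁻ s, ENNReal.ofReal ((empDR h s.1 s.2 - b) ^ 2) ∂sampleKernel U n m sc
          ∂Measure.pi (fun _ => D) := Measure.lintegral_bind hK hF.aemeasurable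
    _ ≤ ∫⁻ sc, ENNReal.ofReal (1 / (4 * n)) + ENNReal.ofReal ((Ψ sc - b) ^ 2)
          ∂Measure.pi (fun _ => D) := lintegral_mono hcond
    _ ≤ ENNReal.ofReal (1 / (4 * n)) + ENNReal.ofReal (1 / (4 * n)) := by
          rw [lintegral_add_left measurable_const, lintegral_const, measure_univ, mul_one]
          gcongr
    _ = ENNReal.ofReal (1 / (2 * n)) := by
          rw [← ENNReal.ofReal_add (by positivity) (by positivity)]
          congr 1
          field_simp
          ring

theorem le_integral_expectedPerturbLoss {D : Measure (X × Bool)} [IsProbabilityMeasure D]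
    (hU : ∀ x j, IsProbabilityMeasure (U x j)) (hh : Measurable h) (hm : m ≠ 0)
    (hφ : AEStronglyMeasurable (expectedPerturbLoss U m h) D) {ε : ℝ} (hε : 0 < ε)
    (htrue : ε ≤ trueDR D U h) :
    ε ≤ ∫ p, expectedPerturbLoss U m h p ∂D := by
  have hint : Integrable (adversarialLoss U h) D := by
    by_contra hni
    rw [trueDR_eq_integral_adversarialLoss, integral_undef hni] at htrue
    linarith
  refine htrue.trans (integral_mono hint ?_ (adversarialLoss_le_expectedPerturbLoss hU hh hm))
  exact .of_mem_Icc 0 1 hφ.aemeasurable (ae_of_all _ (expectedPerturbLoss_mem_Icc hU))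

theorem sampleMeasure_empDR_lt_le {D : Measure (X × Bool)} [IsProbabilityMeasure D]
    (hU : ∀ x j, IsProbabilityMeasure (U x j)) (hh : Measurable h) (hn : n ≠ 0) (hm : m ≠ 0)
    (hK : AEMeasurable (sampleKernel U n m) (Measure.pi fun _ => D)) {ε : ℝ} (hε : 0 < ε)
    (htrue : ε ≤ trueDR D U h) :
    sampleMeasure D U n m {s | empDR h s.1 s.2 < ε / 2} ≤ ENNReal.ofReal (2 / (n * ε ^ 2)) := by
  obtain ⟨n, rfl⟩ := Nat.exists_eq_add_one_of_ne_zero hn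
  have hφ := aestronglyMeasurable_expectedPerturbLoss hU hh hK
  set b := ∫ p, expectedPerturbLoss U m h p ∂D
  have hεb : ε ≤ b := le_integral_expectedPerturbLoss hU hh hm hφ hε htrue
  have hF : Measurable fun s : Sample X k (n + 1) m =>
      ENNReal.ofReal ((empDR h s.1 s.2 - b) ^ 2) :=
    ENNReal.measurable_ofReal.comp (((measurable_empDR hh).sub_const b).pow_const 2)
  have hfar : {s : Sample X k (n + 1) m | empDR h s.1 s.2 < ε / 2} ⊆
      {s | ENNReal.ofReal ((ε / 2) ^ 2) ≤ ENNReal.ofReal ((empDR h s.1 s.2 - b) ^ 2)} :=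
    fun s hs => ENNReal.ofReal_le_ofReal (by nlinarith [hs.out])
  calc _ ≤ _ := measure_mono hfar
    _ ≤ (∫⁻ s, ENNReal.ofReal ((empDR h s.1 s.2 - b) ^ 2) ∂sampleMeasure D U (n + 1) m) /
          ENNReal.ofReal ((ε / 2) ^ 2) :=
        meas_ge_le_lintegral_div hF.aemeasurable (by simp [hε.ne']) ENNReal.ofReal_ne_top
    _ ≤ ENNReal.ofReal (1 / (2 * (n + 1 : ℕ))) / ENNReal.ofReal ((ε / 2) ^ 2) := by
        gcongr
        exact lintegral_sq_sub_empDR_le hU hh hn hK hφ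
    _ = ENNReal.ofReal (2 / ((n + 1 : ℕ) * ε ^ 2)) := by
        rw [← ENNReal.ofReal_div_of_pos (by positivity)]
        congr 1
        field_simp

theorem one_sub_le_sampleMeasure_empDR_ge {D : Measure (X × Bool)} [IsProbabilityMeasure D]
    (hU : ∀ x j, IsProbabilityMeasure (U x j)) (hh : Measurable h) (hn : n ≠ 0) (hm : m ≠ 0)
    (hK : AEMeasurable (sampleKernel U n m) (Measure.pi fun _ => D)) {ε : ℝ} (hε : 0 < ε)
    (htrue : ε ≤ trueDR D U h) :
    1 - ENNReal.ofReal (2 / (n * ε ^ 2)) ≤ sampleMeasure D U n m {s | ε / 2 ≤ empDR h s.1 s.2} := by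
  have := isProbabilityMeasure_sampleMeasure hU hK
  have hcompl : {s : Sample X k n m | empDR h s.1 s.2 < ε / 2}ᶜ =
      {s | ε / 2 ≤ empDR h s.1 s.2} := by
    ext s; simp [not_lt]
  rw [← hcompl, prob_compl_eq_one_sub (measurableSet_lt (measurable_empDR hh) measurable_const)]
  gcongr
  exact sampleMeasure_empDR_lt_le hU hh hn hm hK hε htrue

end DistributionalRobustness

open DistributionalRobustness

/-- **Lemma (double sampling, realizable case).** Let `S` and `S'` be two independent
samples, each consisting of `n ≥ 13/ε²` i.i.d. clean examples from `D` together with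
`m ≥ (32/ε²)·log(200/ε)` i.i.d. perturbations from each of the ≤ `k` perturbation
distributions of each clean example.  Let `A` be the event that some `h ∈ H` has
`DR_S(h) = 0` but `DR_D(h) ≥ ε`, and `B` the event that some `h ∈ H` has `DR_S(h) = 0` but
`DR_{S'}(h) ≥ ε/2`.  Then `P(B) ≥ (2/5)·P(A)`. -/
theorem double_sampling_realizable
    {X : Type*} [MeasurableSpace X] {k n m : ℕ}
    (H : Set (X → Bool)) (hH : ∀ h ∈ H, Measurable h)
    (D : Measure (X × Bool)) [IsProbabilityMeasure D]
    (U : X → Fin k → Measure X) (hU : ∀ x j, IsProbabilityMeasure (U x j))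
    (ε : ℝ) (hε0 : 0 < ε) (hε1 : ε < 1)
    (hn : 13 / ε ^ 2 ≤ (n : ℝ))
    (hm : 32 / ε ^ 2 * Real.log (200 / ε) ≤ (m : ℝ)) :
    2 / 5 * ((sampleMeasure D U n m).prod (sampleMeasure D U n m))
        {p | ∃ h ∈ H, empDR h p.1.1 p.1.2 = 0 ∧ ε ≤ trueDR D U h} ≤
      ((sampleMeasure D U n m).prod (sampleMeasure D U n m))
        {p | ∃ h ∈ H, empDR h p.1.1 p.1.2 = 0 ∧ ε / 2 ≤ empDR h p.2.1 p.2.2} := by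
  by_cases hK : AEMeasurable (sampleKernel U n m) (Measure.pi fun _ => D)
  swap
  · simp [sampleMeasure_eq_zero_of_not_aemeasurable hK]
  have hn0 : (0 : ℝ) < n := lt_of_lt_of_le (by positivity) hn
  have hm0 : (0 : ℝ) < m := by
    have hlog : 0 < Real.log (200 / ε) := Real.log_pos ((one_lt_div hε0).mpr (by linarith))
    exact lt_of_lt_of_le (by positivity) hm
  have hconst : (2 : ℝ≥0∞) / 5 ≤ 1 - ENNReal.ofReal (2 / (n * ε ^ 2)) := by
    have : 2 / (n * ε ^ 2) ≤ 2 / 13 :=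
      div_le_div_of_nonneg_left zero_le_two (by norm_num) ((div_le_iff₀ (by positivity)).mp hn)
    rw [← ENNReal.ofReal_one, ← ENNReal.ofReal_sub _ (by positivity),
      show (2 : ℝ≥0∞) / 5 = ENNReal.ofReal (2 / 5) by norm_num [ENNReal.ofReal_div_of_pos]]
    exact ENNReal.ofReal_le_ofReal (by linarith)
  have := isProbabilityMeasure_sampleMeasure hU hK
  set ν := sampleMeasure D U n m
  set A := {s : Sample X k n m | ∃ h ∈ H, empDR h s.1 s.2 = 0 ∧ ε ≤ trueDR D U h}
  calc 2 / 5 * (ν.prod ν) (Prod.fst ⁻¹' A)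
      = 2 / 5 * ν A := by rw [← Set.prod_univ, Measure.prod_prod, measure_univ, mul_one]
    _ ≤ (1 - ENNReal.ofReal (2 / (n * ε ^ 2))) * ν A := by gcongr
    _ ≤ _ := by
      refine mul_measure_le_prod_of_le_measure_preimage_mk fun s ⟨h, hhH, hS, htrue⟩ => ?_
      refine (one_sub_le_sampleMeasure_empDR_ge hU (hH h hhH) (by exact_mod_cast hn0.ne')
        (by exact_mod_cast hm0.ne') hK hε0 htrue).trans (measure_mono fun s' hs' => ?_)
      exact ⟨h, hhH, hS, hs'⟩
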